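/- arXiv:1006.0478 — 3 statements merged into one kernel-verified Lean document; each statement's English description precedes it below -/
import Mathlib

section
/- Let R be a commutative ring, D : R → R a derivation, F ∈ R, and let A_{s,l} be the associated double sequence. Let k ≥ 2 and let s = s₁ + ⋯ + s_k with each s_i ≥ 1 (so s ≥ 2). Then for every l ≥ 0, (s!/(s₁!⋯s_k!)) · A_{s,l} = Σ (l!/(l₁!⋯l_k!)) · A_{s₁,l₁} ⋯ A_{s_k,l_k}, where the sum runs over all tuples (l₁,…,l_k) of integers with l₁ + ⋯ + l_k = l and each l_i ≥ 1, and where the multinomial coefficients s!/(s₁!⋯s_k!) and l!/(l₁!⋯l_k!) are the usual integer multinomial coefficients acting by repeated addition. -/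
/-!
For `k = 2` both sides obey the same recursion in `l`: on the left, Pascal's rule in `s` splits
`A_{s₁+s₂,l+1} = F (D A_{s₁+s₂,l} + A_{s₁+s₂-1,l})` into the cases `s₁ - 1` and `s₂ - 1`; on the
right, Pascal's rule in `l` together with the Leibniz rule for `D` produces the same three terms.
Induction on `l` gives the binomial identity, and induction on `k`, splitting off the first factor
of the multinomial coefficients, gives the general one. The constraint `lᵢ ≥ 1` only removes
vanishing terms, since `A_{s,0} = 0` for `s ≥ 1`.
-/

open Finset

theorem Nat.multinomial_univ_fin_succ {k : ℕ} (f : Fin (k + 1) → ℕ) :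
    Nat.multinomial univ f =
      (f 0 + ∑ i, Fin.tail f i).choose (f 0) * Nat.multinomial univ (Fin.tail f) := by
  rw [Fin.univ_succ, Nat.multinomial_cons]
  simp [Nat.multinomial, sum_map, prod_map, Fin.tail]

theorem Finset.Nat.sum_antidiagonalTuple_succ {M : Type*} [AddCommMonoid M] (k n : ℕ)
    (f : (Fin (k + 1) → ℕ) → M) :
    ∑ g ∈ antidiagonalTuple (k + 1) n, f g =
      ∑ p ∈ antidiagonal n, ∑ g ∈ antidiagonalTuple k p.2, f (Fin.cons p.1 g) := by
  rw [sum_sigma']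
  refine sum_nbij' (fun g => ⟨(g 0, ∑ i, Fin.tail g i), Fin.tail g⟩)
    (fun x => Fin.cons x.1.1 x.2) ?_ ?_ ?_ ?_ ?_ <;>
    simp +contextual [mem_antidiagonalTuple, Fin.sum_univ_succ, Fin.tail]

theorem Derivation.sum_antidiagonal_choose_succ_smul_mul
    {S R : Type*} [CommSemiring S] [CommSemiring R] [Algebra S R]
    (D : Derivation S R R) (F : R) {a a' b b' : ℕ → R}
    (ha : ∀ i, a (i + 1) = F * (D (a i) + a' i)) (hb : ∀ j, b (j + 1) = F * (D (b j) + b' j))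
    (l : ℕ) :
    ∑ p ∈ antidiagonal (l + 1), (l + 1).choose p.1 • (a p.1 * b p.2) =
      F * (D (∑ p ∈ antidiagonal l, l.choose p.1 • (a p.1 * b p.2)) +
        ∑ p ∈ antidiagonal l, l.choose p.1 • (a' p.1 * b p.2) +
        ∑ p ∈ antidiagonal l, l.choose p.1 • (a p.1 * b' p.2)) := by
  rw [sum_antidiagonal_choose_succ_nsmul (fun i j => a i * b j), ← sum_add_distrib]
  simp only [map_sum, map_nsmul, Derivation.leibniz, smul_eq_mul, mul_sum, ← sum_add_distrib]
  refine sum_congr rfl fun p hp => ?_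
  rw [Nat.choose_symm_of_eq_add (mem_antidiagonal.mp hp).symm, ha, hb]
  ring

/-- `zero_succ` is the defining recursion at `s = 0`, where `A_{-1,l} = 0`. -/
structure IsDoubleSeq {S R : Type*} [CommSemiring S] [CommSemiring R] [Algebra S R]
    (D : Derivation S R R) (F : R) (A : ℕ → ℕ → R) : Prop where
  zero_zero : A 0 0 = 1
  eq_zero_of_lt : ∀ {s l : ℕ}, l < s → A s l = 0
  zero_succ : ∀ l, A 0 (l + 1) = F * D (A 0 l)
  succ_succ : ∀ s l, A (s + 1) (l + 1) = F * (D (A (s + 1) l) + A s l)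

namespace IsDoubleSeq

variable {S R : Type*} [CommSemiring S] [CommSemiring R] [Algebra S R]
  {D : Derivation S R R} {F : R} {A : ℕ → ℕ → R}

theorem zero_succ_eq_zero (hA : IsDoubleSeq D F A) (l : ℕ) : A 0 (l + 1) = 0 := by
  induction l with
  | zero => rw [hA.zero_succ, hA.zero_zero, D.map_one_eq_zero, mul_zero]
  | succ l ih => rw [hA.zero_succ, ih, map_zero, mul_zero]

theorem zero_eq_zero_of_ne (hA : IsDoubleSeq D F A) {l : ℕ} (hl : l ≠ 0) : A 0 l = 0 := by
  obtain ⟨l, rfl⟩ := Nat.exists_eq_succ_of_ne_zero hl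
  exact hA.zero_succ_eq_zero l

theorem sum_antidiagonal_choose_zero_left (hA : IsDoubleSeq D F A) (b : ℕ → R) (l : ℕ) :
    ∑ p ∈ antidiagonal l, l.choose p.1 • (A 0 p.1 * b p.2) = b l := by
  rw [sum_eq_single_of_mem (0, l) (by simp)]
  · simp [hA.zero_zero]
  · rintro ⟨i, j⟩ hij hne
    have hi : i ≠ 0 := by rintro rfl; simp_all
    rw [hA.zero_eq_zero_of_ne hi, zero_mul, smul_zero]

theorem sum_antidiagonal_choose_zero_right (hA : IsDoubleSeq D F A) (a : ℕ → R) (l : ℕ) :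
    ∑ p ∈ antidiagonal l, l.choose p.1 • (a p.1 * A 0 p.2) = a l := by
  rw [sum_eq_single_of_mem (l, 0) (by simp)]
  · simp [hA.zero_zero]
  · rintro ⟨i, j⟩ hij hne
    have hj : j ≠ 0 := by rintro rfl; simp_all
    rw [hA.zero_eq_zero_of_ne hj, mul_zero, smul_zero]

theorem choose_smul_add (hA : IsDoubleSeq D F A) (s₁ s₂ l : ℕ) :
    (s₁ + s₂).choose s₁ • A (s₁ + s₂) l =
      ∑ p ∈ antidiagonal l, l.choose p.1 • (A s₁ p.1 * A s₂ p.2) := by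
  induction l generalizing s₁ s₂ with
  | zero => ?_
  | succ l ih => ?_
  all_goals
    rcases s₁ with _ | u
    · rw [Nat.choose_zero_right, one_smul, zero_add, hA.sum_antidiagonal_choose_zero_left]
    rcases s₂ with _ | v
    · rw [add_zero, Nat.choose_self, one_smul, hA.sum_antidiagonal_choose_zero_right]
  · simp [hA.eq_zero_of_lt]
  · calc (u + 1 + (v + 1)).choose (u + 1) • A (u + 1 + (v + 1)) (l + 1)
        = F * (D ((u + 1 + (v + 1)).choose (u + 1) • A (u + 1 + (v + 1)) l) +
            (u + (v + 1)).choose u • A (u + (v + 1)) l +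
            (u + 1 + v).choose (u + 1) • A (u + 1 + v) l) := by
          rw [show u + 1 + (v + 1) = u + v + 1 + 1 by ring, show u + (v + 1) = u + v + 1 by ring,
            show u + 1 + v = u + v + 1 by ring, hA.succ_succ, Nat.choose_succ_succ, map_nsmul]
          ring
      _ = _ := by
          rw [ih, ih, ih,
            D.sum_antidiagonal_choose_succ_smul_mul F (hA.succ_succ u) (hA.succ_succ v)]

theorem multinomial_smul (hA : IsDoubleSeq D F A) {k : ℕ} (sv : Fin k → ℕ) (l : ℕ) :
    Nat.multinomial univ sv • A (∑ i, sv i) l =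
      ∑ g ∈ Nat.antidiagonalTuple k l, Nat.multinomial univ g • ∏ i, A (sv i) (g i) := by
  induction k generalizing l with
  | zero => cases l <;> simp [Nat.multinomial, hA.zero_zero, hA.zero_succ_eq_zero]
  | succ k ih =>
    calc Nat.multinomial univ sv • A (∑ i, sv i) l
        = Nat.multinomial univ (Fin.tail sv) •
            ((sv 0 + ∑ i, Fin.tail sv i).choose (sv 0) • A (sv 0 + ∑ i, Fin.tail sv i) l) := by
          rw [Nat.multinomial_univ_fin_succ, Fin.sum_univ_succ, mul_comm, mul_smul]
          simp only [Fin.tail]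
      _ = ∑ p ∈ antidiagonal l, l.choose p.1 • (A (sv 0) p.1 *
            ∑ g ∈ Nat.antidiagonalTuple k p.2,
              Nat.multinomial univ g • ∏ i, A (Fin.tail sv i) (g i)) := by
          simp only [hA.choose_smul_add, smul_sum, ← ih]
          refine sum_congr rfl fun p _ => ?_
          rw [smul_comm, mul_smul_comm]
      _ = ∑ p ∈ antidiagonal l, ∑ g ∈ Nat.antidiagonalTuple k p.2,
            Nat.multinomial univ (Fin.cons p.1 g : Fin (k + 1) → ℕ) •
              ∏ i, A (sv i) ((Fin.cons p.1 g : Fin (k + 1) → ℕ) i) := by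
          refine sum_congr rfl fun p hp => ?_
          rw [mul_sum, smul_sum]
          refine sum_congr rfl fun g hg => ?_
          rw [Nat.multinomial_univ_fin_succ, Fin.prod_univ_succ, Fin.tail_cons, Fin.cons_zero,
            Nat.mem_antidiagonalTuple.mp hg, mem_antidiagonal.mp hp, mul_smul, mul_smul_comm]
          simp only [Fin.cons_succ, Fin.tail]
      _ = _ := (Nat.sum_antidiagonalTuple_succ k l
            fun g => Nat.multinomial univ g • ∏ i, A (sv i) (g i)).symm

end IsDoubleSeq

theorem statement1_general {R : Type*} [CommRing R] (D : R → R)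
    (hD_add : ∀ a b : R, D (a + b) = D a + D b)
    (hD_mul : ∀ a b : R, D (a * b) = D a * b + a * D b)
    (F : R) (A : ℕ → ℕ → R)
    (hA00 : A 0 0 = 1)
    (hAvanish : ∀ s l : ℕ, l < s → A s l = 0)
    (hArec0 : ∀ l : ℕ, A 0 (l + 1) = F * D (A 0 l))
    (hArec : ∀ s l : ℕ, A (s + 1) (l + 1) = F * (D (A (s + 1) l) + A s l))
    (k : ℕ) (sv : Fin k → ℕ) (hsv : ∀ i, 1 ≤ sv i) (l : ℕ) :
    Nat.multinomial Finset.univ sv • A (∑ i, sv i) l =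
      ∑ g ∈ (Finset.Nat.antidiagonalTuple k l).filter (fun g => ∀ i, 1 ≤ g i),
        Nat.multinomial Finset.univ g • ∏ i, A (sv i) (g i) := by
  let δ : Derivation ℤ R R := .mk' (AddMonoidHom.mk' D hD_add).toIntLinearMap fun a b => by
    simp only [AddMonoidHom.coe_toIntLinearMap, AddMonoidHom.mk'_apply, smul_eq_mul, hD_mul]
    ring
  have hA : IsDoubleSeq δ F A := ⟨hA00, hAvanish _ _, hArec0, hArec⟩
  rw [hA.multinomial_smul sv l]
  refine (sum_filter_of_ne fun g _ hg i => Nat.one_le_iff_ne_zero.mpr fun hgi => hg ?_).symm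
  rw [prod_eq_zero (mem_univ i) (hgi ▸ hAvanish _ _ (hsv i)), smul_zero]

/-- Let `R` be a commutative ring, `D : R → R` a derivation, `F ∈ R`, and
`A` the associated double sequence.  Let `k ≥ 2` and `s = s₁ + ⋯ + s_k` with each `sᵢ ≥ 1`.
Then for every `l ≥ 0`,
`(s!/(s₁!⋯s_k!)) • A s l = ∑_{l₁+⋯+l_k = l, lᵢ ≥ 1} (l!/(l₁!⋯l_k!)) • A s₁ l₁ ⋯ A s_k l_k`. -/
theorem statement1 {R : Type*} [CommRing R] (D : R → R)
    (hD_add : ∀ a b : R, D (a + b) = D a + D b)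
    (hD_mul : ∀ a b : R, D (a * b) = D a * b + a * D b)
    (F : R) (A : ℕ → ℕ → R)
    (hA00 : A 0 0 = 1)
    (hAvanish : ∀ s l : ℕ, l < s → A s l = 0)
    (hArec0 : ∀ l : ℕ, A 0 (l + 1) = F * D (A 0 l))
    (hArec : ∀ s l : ℕ, A (s + 1) (l + 1) = F * (D (A (s + 1) l) + A s l))
    (k : ℕ) (hk : 2 ≤ k) (sv : Fin k → ℕ) (hsv : ∀ i, 1 ≤ sv i) (l : ℕ) :
    Nat.multinomial Finset.univ sv • A (∑ i, sv i) l =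
      ∑ g ∈ (Finset.Nat.antidiagonalTuple k l).filter (fun g => ∀ i, 1 ≤ g i),
        Nat.multinomial Finset.univ g • ∏ i, A (sv i) (g i) :=
  statement1_general D hD_add hD_mul F A hA00 hAvanish hArec0 hArec k sv hsv l
end

section
/- Let κ > 0, let k, q ∈ ℝ³ with k ≠ 0 and κ|q| ≤ 1, and define P : ℝ → ℝ³ by P(μ) = (√(1 − κ²|q|²)/(κ|k|)) · sin(κ|k|μ) · k + cos(κ|k|μ) · q − (sin(κ|k|μ)/|k|) · (k × q). Then P(0) = q, and at every μ for which u(μ) := √(1 − κ²|q|²) cos(κ|k|μ) − (κ(k·q)/|k|) sin(κ|k|μ) ≥ 0, the function P satisfies the ODE P'(μ) = √(1 − κ²|P(μ)|²) · k − κ · (k × P(μ)). -/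
def dot3 (a b : Fin 3 → ℝ) : ℝ := ∑ i, a i * b i

noncomputable def norm3 (a : Fin 3 → ℝ) : ℝ := Real.sqrt (dot3 a a)

def cross3 (a b : Fin 3 → ℝ) : Fin 3 → ℝ :=
  ![a 1 * b 2 - a 2 * b 1, a 2 * b 0 - a 0 * b 2, a 0 * b 1 - a 1 * b 0]

/-!
With `n = |k|` and `A = √(1 - κ²|q|²)`, the curve is harmonic,
`P(μ) = sin(κnμ) • (A/(κn) • k - n⁻¹ • k × q) + cos(κnμ) • q`, so its derivative is explicit.
Since `k × q` is orthogonal to `k` and `q` and `|k × q|² = |k|²|q|² - (k·q)²` (Lagrange),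
`1 - κ²|P(μ)|² = u(μ)²`; hence the square root in the ODE is `u(μ)` exactly when `u(μ) ≥ 0`.
The ODE then reduces to `k × k = 0` and `k × (k × q) = (k·q) k - |k|² q`.
-/

open Matrix Real

lemma dot3_eq_dotProduct (a b : Fin 3 → ℝ) : dot3 a b = a ⬝ᵥ b := rfl

lemma cross3_eq_crossProduct (a b : Fin 3 → ℝ) : cross3 a b = a ⨯₃ b := rfl

lemma dotProduct_self_nonneg {ι : Type*} [Fintype ι] (v : ι → ℝ) : 0 ≤ v ⬝ᵥ v :=
  Finset.sum_nonneg fun i _ => mul_self_nonneg (v i)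

lemma dotProduct_self_pos {ι : Type*} [Fintype ι] {v : ι → ℝ} (hv : v ≠ 0) : 0 < v ⬝ᵥ v :=
  (dotProduct_self_nonneg v).lt_of_ne (Ne.symm (dotProduct_self_eq_zero.not.mpr hv))

theorem hasDerivAt_sin_smul_add_cos_smul {E : Type*} [NormedAddCommGroup E] [NormedSpace ℝ E]
    (ω μ : ℝ) (u v : E) :
    HasDerivAt (fun t => sin (ω * t) • u + cos (ω * t) • v)
      ((ω * cos (ω * μ)) • u - (ω * sin (ω * μ)) • v) μ := by
  have hsin : HasDerivAt (fun t => sin (ω * t)) (cos (ω * μ) * ω) μ := by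
    simpa using ((hasDerivAt_id μ).const_mul ω).sin
  have hcos : HasDerivAt (fun t => cos (ω * t)) (-sin (ω * μ) * ω) μ := by
    simpa using ((hasDerivAt_id μ).const_mul ω).cos
  exact ((hsin.smul_const u).add (hcos.smul_const v)).congr_deriv (by module)

theorem cross_smul_add_smul_sub_smul_cross (a c b : ℝ) (k q : Fin 3 → ℝ) :
    k ⨯₃ (a • k + c • q - b • k ⨯₃ q) = c • k ⨯₃ q - b • ((k ⬝ᵥ q) • k - (k ⬝ᵥ k) • q) := by
  simp only [map_add, map_sub, map_smul, cross_self, cross_cross_eq_smul_sub_smul']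
  module

theorem dotProduct_self_smul_add_smul_sub_smul_cross (a c b : ℝ) (k q : Fin 3 → ℝ) :
    (a • k + c • q - b • k ⨯₃ q) ⬝ᵥ (a • k + c • q - b • k ⨯₃ q) =
      a ^ 2 * (k ⬝ᵥ k) + c ^ 2 * (q ⬝ᵥ q) + 2 * a * c * (k ⬝ᵥ q)
        + b ^ 2 * ((k ⬝ᵥ k) * (q ⬝ᵥ q) - (k ⬝ᵥ q) ^ 2) := by
  simp only [add_dotProduct, dotProduct_add, sub_dotProduct, dotProduct_sub, smul_dotProduct,
    dotProduct_smul, smul_eq_mul, dot_self_cross, dot_cross_self, cross_dot_cross,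
    dotProduct_comm (k ⨯₃ q), dotProduct_comm q k]
  ring

theorem one_sub_sq_mul_dotProduct_self_eq_sq {κ n A : ℝ} {k q : Fin 3 → ℝ} (hκ : κ ≠ 0)
    (hn : n ≠ 0) (hkk : k ⬝ᵥ k = n ^ 2) (hA : A ^ 2 = 1 - κ ^ 2 * (q ⬝ᵥ q)) (θ : ℝ) :
    1 - κ ^ 2 * (((A / (κ * n) * sin θ) • k + cos θ • q - (sin θ / n) • k ⨯₃ q) ⬝ᵥ
        ((A / (κ * n) * sin θ) • k + cos θ • q - (sin θ / n) • k ⨯₃ q)) =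
      (A * cos θ - κ * (k ⬝ᵥ q) / n * sin θ) ^ 2 := by
  rw [dotProduct_self_smul_add_smul_sub_smul_cross, hkk]
  field_simp
  linear_combination -(n ^ 2 * (A ^ 2 + κ ^ 2 * (q ⬝ᵥ q))) * sin_sq_add_cos_sq θ - n ^ 2 * hA

/-- Let `κ > 0`, `k, q ∈ ℝ³` with `k ≠ 0` and `κ|q| ≤ 1`, and define
`P(μ) = (√(1 - κ²|q|²)/(κ|k|)) sin(κ|k|μ) k + cos(κ|k|μ) q - (sin(κ|k|μ)/|k|) (k × q)`.
Then `P(0) = q`, and at every `μ` with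
`u(μ) := √(1 - κ²|q|²) cos(κ|k|μ) - (κ(k·q)/|k|) sin(κ|k|μ) ≥ 0`, the function `P`
satisfies the ODE `P'(μ) = √(1 - κ²|P(μ)|²) k - κ (k × P(μ))`. -/
theorem statement15 (κ : ℝ) (hκ : 0 < κ) (k q : Fin 3 → ℝ) (hk : k ≠ 0)
    (hq : κ * norm3 q ≤ 1)
    (P : ℝ → Fin 3 → ℝ)
    (hP : ∀ μ : ℝ, P μ =
      (Real.sqrt (1 - κ ^ 2 * dot3 q q) / (κ * norm3 k) *
        Real.sin (κ * norm3 k * μ)) • k +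
      Real.cos (κ * norm3 k * μ) • q -
      (Real.sin (κ * norm3 k * μ) / norm3 k) • cross3 k q) :
    P 0 = q ∧
    ∀ μ : ℝ,
      0 ≤ Real.sqrt (1 - κ ^ 2 * dot3 q q) * Real.cos (κ * norm3 k * μ) -
          κ * dot3 k q / norm3 k * Real.sin (κ * norm3 k * μ) →
      HasDerivAt P
        (Real.sqrt (1 - κ ^ 2 * dot3 (P μ) (P μ)) • k - κ • cross3 k (P μ)) μ := by
  simp only [norm3, dot3_eq_dotProduct, cross3_eq_crossProduct] at hq hP ⊢
  have hkk : k ⬝ᵥ k = √(k ⬝ᵥ k) ^ 2 := (sq_sqrt (dotProduct_self_pos hk).le).symm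
  have hn : 0 < √(k ⬝ᵥ k) := sqrt_pos.mpr (dotProduct_self_pos hk)
  have hA : √(1 - κ ^ 2 * (q ⬝ᵥ q)) ^ 2 = 1 - κ ^ 2 * (q ⬝ᵥ q) := by
    refine sq_sqrt (sub_nonneg.mpr ?_)
    have hsq := pow_le_one₀ (n := 2) (mul_nonneg hκ.le (sqrt_nonneg _)) hq
    rwa [mul_pow, sq_sqrt (dotProduct_self_nonneg q)] at hsq
  set n := √(k ⬝ᵥ k)
  set A := √(1 - κ ^ 2 * (q ⬝ᵥ q))
  refine ⟨by simp [hP], fun μ hu => ?_⟩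
  rw [hP μ, one_sub_sq_mul_dotProduct_self_eq_sq hκ.ne' hn.ne' hkk hA, sqrt_sq hu,
    cross_smul_add_smul_sub_smul_cross, hkk]
  have hP_harmonic : P = fun t => sin (κ * n * t) • ((A / (κ * n)) • k - n⁻¹ • k ⨯₃ q)
      + cos (κ * n * t) • q := funext fun t => by rw [hP t]; module
  rw [hP_harmonic]
  refine (hasDerivAt_sin_smul_add_cos_smul (κ * n) μ _ q).congr_deriv ?_
  match_scalars <;> field_simp
  ring
end

section
/- Let κ > 0 and define, for k, q ∈ ℝ³ with k ≠ 0, the vector K(k,q) = (√(1 − κ²|q|²)/(κ|k|)) sin(κ|k|) · k + cos(κ|k|) · q − (sin(κ|k|)/|k|) · (k × q), and K₀(k) = K(k,0) = (sin(κ|k|)/(κ|k|)) · k. Then for all k, q ∈ ℝ³ with 0 < κ|k| < 1 and κ|q| ≤ 1, setting k' = (arcsin(κ|k|)/(κ|k|)) · k (so that K₀(k') = k), one has K(k', q) = √(1 − κ²|q|²) · k + √(1 − κ²|k|²) · q − κ · (k × q). (This computes the deformed addition of momenta 𝒟(k,q) = K(K₀^{-1}(k), q) for the Freidel–Livine realization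 of su(2).) -/
/-- `K(k,q) = (√(1 - κ²|q|²)/(κ|k|)) sin(κ|k|) k + cos(κ|k|) q - (sin(κ|k|)/|k|) (k × q)`,
the Freidel–Livine function `K` for `su(2)`. -/
noncomputable def KFL (κ : ℝ) (k q : Fin 3 → ℝ) : Fin 3 → ℝ :=
  (Real.sqrt (1 - κ ^ 2 * dot3 q q) / (κ * norm3 k) * Real.sin (κ * norm3 k)) • k +
    Real.cos (κ * norm3 k) • q - (Real.sin (κ * norm3 k) / norm3 k) • cross3 k q

lemma dot3_smul_smul (c : ℝ) (a : Fin 3 → ℝ) : dot3 (c • a) (c • a) = c ^ 2 * dot3 a a := by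
  simp only [dot3, Pi.smul_apply, smul_eq_mul, Fin.sum_univ_three]
  ring

lemma dot3_self_nonneg (a : Fin 3 → ℝ) : 0 ≤ dot3 a a :=
  Finset.sum_nonneg fun i _ => mul_self_nonneg (a i)

lemma sq_norm3 (a : Fin 3 → ℝ) : norm3 a ^ 2 = dot3 a a :=
  Real.sq_sqrt (dot3_self_nonneg a)

lemma norm3_smul (c : ℝ) (a : Fin 3 → ℝ) : norm3 (c • a) = |c| * norm3 a := by
  rw [norm3, dot3_smul_smul, Real.sqrt_mul (sq_nonneg c), Real.sqrt_sq_eq_abs, norm3]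

lemma cross3_smul_left (c : ℝ) (a b : Fin 3 → ℝ) : cross3 (c • a) b = c • cross3 a b := by
  funext i
  fin_cases i <;> simp [cross3] <;> ring

lemma cross3_zero_right (a : Fin 3 → ℝ) : cross3 a 0 = 0 := by
  funext i
  fin_cases i <;> simp [cross3]

lemma KFL_smul (κ : ℝ) {a : ℝ} (ha : 0 < a) (k q : Fin 3 → ℝ) :
    KFL κ (a • k) q =
      (Real.sqrt (1 - κ ^ 2 * dot3 q q) * Real.sin (κ * (a * norm3 k)) / (κ * norm3 k)) • k +
        Real.cos (κ * (a * norm3 k)) • q -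
        (Real.sin (κ * (a * norm3 k)) / norm3 k) • cross3 k q := by
  have hk_coeff : Real.sqrt (1 - κ ^ 2 * dot3 q q) / (κ * (a * norm3 k)) *
      Real.sin (κ * (a * norm3 k)) * a =
      Real.sqrt (1 - κ ^ 2 * dot3 q q) * Real.sin (κ * (a * norm3 k)) / (κ * norm3 k) := by
    rw [mul_left_comm, mul_comm, ← div_div]
    field_simp
  have hcross_coeff : Real.sin (κ * (a * norm3 k)) / (a * norm3 k) * a =
      Real.sin (κ * (a * norm3 k)) / norm3 k := by
    rw [mul_comm, ← div_div]
    field_simp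
  rw [KFL, norm3_smul, abs_of_pos ha, cross3_smul_left, smul_smul, smul_smul, hk_coeff,
    hcross_coeff]

theorem KFL_arcsin_smul (κ : ℝ) (k q : Fin 3 → ℝ)
    (hk0 : 0 < κ * norm3 k) (hk1 : κ * norm3 k ≤ 1) :
    KFL κ ((Real.arcsin (κ * norm3 k) / (κ * norm3 k)) • k) q =
      Real.sqrt (1 - κ ^ 2 * dot3 q q) • k +
      Real.sqrt (1 - κ ^ 2 * dot3 k k) • q - κ • cross3 k q := by
  set x := κ * norm3 k with hx
  obtain ⟨hκ, hk⟩ : κ ≠ 0 ∧ norm3 k ≠ 0 := mul_ne_zero_iff.mp hk0.ne'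
  have hθ : κ * (Real.arcsin x / x * norm3 k) = Real.arcsin x := by
    rw [hx]
    field_simp
  have hsin : Real.sin (Real.arcsin x) = x := Real.sin_arcsin (by linarith) hk1
  have hcos : Real.cos (Real.arcsin x) = Real.sqrt (1 - κ ^ 2 * dot3 k k) := by
    rw [Real.cos_arcsin, hx, mul_pow, sq_norm3]
  rw [KFL_smul κ (div_pos (Real.arcsin_pos.mpr hk0) hk0), hθ, hsin, hcos, hx]
  congr 3 <;> field_simp

theorem statement16_general (κ : ℝ) (k q : Fin 3 → ℝ)
    (hk0 : 0 < κ * norm3 k) (hk1 : κ * norm3 k < 1) :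
    KFL κ ((Real.arcsin (κ * norm3 k) / (κ * norm3 k)) • k) 0 = k ∧
    KFL κ ((Real.arcsin (κ * norm3 k) / (κ * norm3 k)) • k) q =
      Real.sqrt (1 - κ ^ 2 * dot3 q q) • k +
      Real.sqrt (1 - κ ^ 2 * dot3 k k) • q - κ • cross3 k q := by
  refine ⟨?_, KFL_arcsin_smul κ k q hk0 hk1.le⟩
  rw [KFL_arcsin_smul κ k 0 hk0 hk1.le, cross3_zero_right]
  simp [dot3]

/-- For `0 < κ|k| < 1` and `κ|q| ≤ 1`, with
`k' = (arcsin(κ|k|)/(κ|k|)) k`, one has `K₀(k') = K(k',0) = k` and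
`K(k', q) = √(1 - κ²|q|²) k + √(1 - κ²|k|²) q - κ (k × q)`.
This computes the deformed addition of momenta `𝒟(k,q) = K(K₀⁻¹(k), q)` for the
Freidel–Livine realization of `su(2)`. -/
theorem statement16 (κ : ℝ) (hκ : 0 < κ) (k q : Fin 3 → ℝ)
    (hk0 : 0 < κ * norm3 k) (hk1 : κ * norm3 k < 1) (hq : κ * norm3 q ≤ 1) :
    KFL κ ((Real.arcsin (κ * norm3 k) / (κ * norm3 k)) • k) 0 = k ∧
    KFL κ ((Real.arcsin (κ * norm3 k) / (κ * norm3 k)) • k) q =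
      Real.sqrt (1 - κ ^ 2 * dot3 q q) • k +
      Real.sqrt (1 - κ ^ 2 * dot3 k k) • q - κ • cross3 k q :=
  statement16_general κ k q hk0 hk1
end
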